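/- arXiv:2411.15830 — 3 statements merged into one kernel-verified Lean document; each statement's English description precedes it below -/
import Mathlib

section
/- Let (ν_n) be a sequence of finite Borel measures on a Euclidean space E converging weakly to a finite Borel measure ν. Let (f_n) be a uniformly bounded sequence of Borel measurable functions and f a bounded continuous function such that for every compact set B ⊂ E, the essential supremum with respect to ν_n of |f_n − f| on B tends to 0 as n → ∞. Then ∫ f_n dν_n → ∫ f dν as n → ∞. -/
/-!
Write `∫ f n ∂ν n - ∫ flim ∂νlim` as `∫ (f n - flim) ∂ν n + (∫ flim ∂ν n - ∫ flim ∂νlim)`; the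
second term tends to `0` by weak convergence. For the first, tightness of `νlim` and the
portmanteau inequality for closed sets give one compact `K` outside which all late `ν n` have
small mass. On `K` the integrand is a.e. bounded by its essential supremum, which tends to `0`
while the masses `ν n univ` stay bounded; off `K` it is uniformly bounded.
-/

open MeasureTheory Filter Topology

open scoped ENNReal

namespace MeasureTheory

theorem abs_integral_le_essSup_indicator_mul_add {α : Type*} [MeasurableSpace α]
    {μ : Measure α} [IsFiniteMeasure μ] {g : α → ℝ} {B : Set α} {L : ℝ}
    (hB : MeasurableSet B) (hg : AEStronglyMeasurable g μ) (hgL : ∀ x, |g x| ≤ L) :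
    |∫ x, g x ∂μ| ≤
      essSup (fun x => |B.indicator g x|) μ * μ.real Set.univ + L * μ.real Bᶜ := by
  have hindL : ∀ x, |B.indicator g x| ≤ L := fun x => by
    by_cases hx : x ∈ B
    · simpa [hx] using hgL x
    · simpa [hx] using (abs_nonneg _).trans (hgL x)
  have hess : ∀ᵐ x ∂μ, ‖B.indicator g x‖ ≤ essSup (fun x => |B.indicator g x|) μ :=
    ae_le_essSup (isBoundedUnder_of ⟨L, hindL⟩)
  rw [← integral_add_compl hB (Integrable.of_bound hg L (ae_of_all _ hgL)),
    ← integral_indicator hB]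
  have hcompl : ‖∫ x in Bᶜ, g x ∂μ‖ ≤ L * μ.real Bᶜ :=
    norm_setIntegral_le_of_norm_le_const (measure_lt_top _ _) fun x _ => hgL x
  exact (abs_add_le _ _).trans (add_le_add (norm_integral_le_of_norm_le_const hess) hcompl)

theorem FiniteMeasure.exists_isCompact_eventually_measure_compl_lt {X ι : Type*}
    [PseudoMetricSpace X] [ProperSpace X] [MeasurableSpace X] [BorelSpace X] {l : Filter ι}
    {μs : ι → FiniteMeasure X} {μ : FiniteMeasure X} (h : Tendsto μs l (𝓝 μ))
    {ε : ℝ≥0∞} (hε : 0 < ε) :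
    ∃ K, IsCompact K ∧ ∀ᶠ i in l, (μs i : Measure X) Kᶜ < ε := by
  obtain ⟨δ, hδ, hδε⟩ := exists_between hε
  obtain ⟨K, hK, hμK⟩ := isTightMeasureSet_iff_exists_isCompact_measure_compl_le.mp
    (isTightMeasureSet_singleton (μ := (μ : Measure X))) δ hδ
  -- `F` is closed, lies in `Kᶜ`, and contains the complement of the compact `cthickening 1 K`
  set F := (Metric.thickening 1 K)ᶜ
  have hF : IsClosed F := Metric.isOpen_thickening.isClosed_compl
  have hFK : (μ : Measure X) F < ε :=
    (measure_mono (Set.compl_subset_compl.mpr (Metric.self_subset_thickening one_pos K))).trans_lt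
      ((hμK _ rfl).trans_lt hδε)
  have hlimsup : l.limsup (fun i => (μs i : Measure X) F) < ε :=
    (FiniteMeasure.limsup_measure_closed_le_of_tendsto h hF).trans_lt hFK
  refine ⟨Metric.cthickening 1 K, hK.cthickening, ?_⟩
  filter_upwards [eventually_lt_of_limsup_lt hlimsup] with i hi
  exact (measure_mono (Set.compl_subset_compl.mpr
    (Metric.thickening_subset_cthickening 1 K))).trans_lt hi

theorem FiniteMeasure.tendsto_integral_zero_of_tendsto_essSup_indicator {X ι : Type*}
    [MetricSpace X] [ProperSpace X] [MeasurableSpace X] [BorelSpace X] {l : Filter ι}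
    {μs : ι → FiniteMeasure X} {μ : FiniteMeasure X} (h : Tendsto μs l (𝓝 μ))
    {g : ι → X → ℝ} {L : ℝ} (hg : ∀ i, AEStronglyMeasurable (g i) (μs i))
    (hgL : ∀ i x, |g i x| ≤ L)
    (hconv : ∀ K : Set X, IsCompact K →
      Tendsto (fun i => essSup (fun x => |K.indicator (g i) x|) (μs i : Measure X)) l (𝓝 0)) :
    Tendsto (fun i => ∫ x, g i x ∂(μs i : Measure X)) l (𝓝 0) := by
  rw [Metric.tendsto_nhds]
  intro ε hε
  set η := ε / (2 * (|L| + 1))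
  have hη : 0 < η := by positivity
  obtain ⟨K, hK, htail⟩ :=
    exists_isCompact_eventually_measure_compl_lt h (ENNReal.ofReal_pos.mpr hη)
  have hmass : Tendsto (fun i => (μs i : Measure X).real Set.univ) l
      (𝓝 ((μ : Measure X).real Set.univ)) :=
    (NNReal.continuous_coe.tendsto _).comp h.mass
  have hinner : ∀ᶠ i in l,
      essSup (fun x => |K.indicator (g i) x|) (μs i : Measure X) *
        (μs i : Measure X).real Set.univ < ε / 2 := by
    refine ((hconv K hK).mul hmass).eventually_lt_const ?_
    rw [zero_mul]
    positivity
  filter_upwards [htail, hinner] with i hi hi'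
  have houter : L * (μs i : Measure X).real Kᶜ ≤ ε / 2 :=
    calc L * (μs i : Measure X).real Kᶜ ≤ |L| * η :=
          mul_le_mul (le_abs_self L) (ENNReal.toReal_le_of_le_ofReal hη.le hi.le)
            measureReal_nonneg (abs_nonneg L)
      _ ≤ ε / 2 := by
          rw [mul_div_assoc', div_le_div_iff₀ (by positivity) two_pos]
          nlinarith [abs_nonneg L]
  rw [Real.dist_0_eq_abs]
  calc |∫ x, g i x ∂(μs i : Measure X)|
      ≤ essSup (fun x => |K.indicator (g i) x|) (μs i : Measure X) *
          (μs i : Measure X).real Set.univ + L * (μs i : Measure X).real Kᶜ :=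
        abs_integral_le_essSup_indicator_mul_add hK.measurableSet (hg i) (hgL i)
    _ < ε / 2 + ε / 2 := add_lt_add_of_lt_of_le hi' houter
    _ = ε := add_halves ε

end MeasureTheory

/-- If finite Borel measures `ν n` on a Euclidean space converge weakly to a finite
Borel measure `ν` (i.e. integrals of every bounded continuous function converge),
`(f n)` is a uniformly bounded sequence of Borel measurable functions, `f` is a
bounded continuous function, and for every compact `B` the `L^∞(ν n)`-norm of
`1_B (f n − f)` tends to `0`, then `∫ f n dν n → ∫ f dν`. -/
theorem tendsto_integral_of_weak_conv_of_essSup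
    (d : ℕ) (ν : ℕ → Measure (EuclideanSpace ℝ (Fin d)))
    (νlim : Measure (EuclideanSpace ℝ (Fin d)))
    [∀ n, IsFiniteMeasure (ν n)] [IsFiniteMeasure νlim]
    (hweak : ∀ g : BoundedContinuousFunction (EuclideanSpace ℝ (Fin d)) ℝ,
      Tendsto (fun n => ∫ x, g x ∂(ν n)) atTop (𝓝 (∫ x, g x ∂νlim)))
    (f : ℕ → EuclideanSpace ℝ (Fin d) → ℝ) (flim : EuclideanSpace ℝ (Fin d) → ℝ)
    (hfmeas : ∀ n, Measurable (f n))
    (Mbd : ℝ) (hbd : ∀ n x, |f n x| ≤ Mbd)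
    (hcont : Continuous flim) (Cbd : ℝ) (hflimbd : ∀ x, |flim x| ≤ Cbd)
    (hconv : ∀ B : Set (EuclideanSpace ℝ (Fin d)), IsCompact B →
      Tendsto (fun n =>
          essSup (fun x => |B.indicator (fun y => f n y - flim y) x|) (ν n))
        atTop (𝓝 0)) :
    Tendsto (fun n => ∫ x, f n x ∂(ν n)) atTop (𝓝 (∫ x, flim x ∂νlim)) := by
  let μs : ℕ → FiniteMeasure (EuclideanSpace ℝ (Fin d)) := fun n => ⟨ν n, inferInstance⟩
  have hμs : Tendsto μs atTop (𝓝 ⟨νlim, inferInstance⟩) :=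
    FiniteMeasure.tendsto_iff_forall_integral_tendsto.mpr hweak
  have hdiff : Tendsto (fun n => ∫ x, f n x - flim x ∂(ν n)) atTop (𝓝 0) :=
    FiniteMeasure.tendsto_integral_zero_of_tendsto_essSup_indicator hμs
      (fun n => ((hfmeas n).sub hcont.measurable).aestronglyMeasurable)
      (fun n x => (abs_sub _ _).trans (add_le_add (hbd n x) (hflimbd x))) hconv
  have hflim : Tendsto (fun n => ∫ x, flim x ∂(ν n)) atTop (𝓝 (∫ x, flim x ∂νlim)) :=
    hweak (.ofNormedAddCommGroup flim hcont Cbd hflimbd)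
  have hsplit : ∀ n, ∫ x, f n x - flim x ∂(ν n) + ∫ x, flim x ∂(ν n) = ∫ x, f n x ∂(ν n) :=
    fun n => by
      rw [integral_sub (.of_bound (hfmeas n).aestronglyMeasurable Mbd (ae_of_all _ (hbd n)))
        (.of_bound hcont.aestronglyMeasurable Cbd (ae_of_all _ hflimbd)), sub_add_cancel]
  simpa only [hsplit, zero_add] using hdiff.add hflim
end

section
/- Let K be a bounded linear operator on a Hilbert space H that is a projection (K² = K), and let σ be a bounded operator (multiplication by a function with values in [0,1]) such that I − σK is invertible. Then the operator K^σ := √(1−σ) · K · (I − σK)^{−1} · √(1−σ) satisfies (K^σ)² = K^σ, i.e., K^σ is also a projection. -/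
/-- Let `K` be a bounded idempotent operator on a complex Hilbert space `H`, let `σ`
be a positive operator with `0 ≤ σ ≤ I` (so that `1 - σ` is positive as well), let
`s` be the positive square root of `1 - σ` (i.e. `s` is positive and `s * s = 1 - σ`),
and suppose `1 - σ K` is invertible with inverse `T`.  Then
`K^σ := s * K * (1 - σK)⁻¹ * s` is again idempotent: `(K^σ)² = K^σ`. -/
theorem deformed_projection_idempotent
    {H : Type*} [NormedAddCommGroup H] [InnerProductSpace ℂ H] [CompleteSpace H]
    (K σ s T : H →L[ℂ] H)
    (hK : K * K = K)
    (hσpos : σ.IsPositive) (hσle : (1 - σ).IsPositive)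
    (hs : s.IsPositive) (hssq : s * s = 1 - σ)
    (hT : (1 - σ * K) * T = 1) (hT' : T * (1 - σ * K) = 1) :
    (s * K * T * s) * (s * K * T * s) = s * K * T * s := by
  have h1 : (1 - σ) * K = (1 - σ * K) * K := by
    rw [sub_mul, sub_mul, one_mul, mul_assoc σ K K, hK]
  have key : T * ((1 - σ) * K) = K := by
    rw [h1, ← mul_assoc, hT', one_mul]
  have h2 : (s * K * T * s) * (s * K * T * s) = s * K * (T * ((1 - σ) * K)) * T * s := by
    rw [← hssq]; noncomm_ring
  rw [h2, key, mul_assoc s K K, hK]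
end

section
/- Let K be a bounded idempotent operator on a Hilbert space H (K² = K) with range R, let σ be a bounded operator with 0 ≤ σ ≤ I such that I − σK is invertible, and set K^σ = √(1−σ) K (I − σK)^{−1} √(1−σ). Then for every f ∈ R, K^σ(√(1−σ) f) = √(1−σ) f; that is, √(1−σ)·R is contained in the range of the projection K^σ, and the fixed points include all √(1−σ)f with f in the range of K. -/
namespace ContinuousLinearMap

variable {R M : Type*} [Ring R] [AddCommGroup M] [TopologicalSpace M] [IsTopologicalAddGroup M]
  [Module R M]

theorem one_sub_mul_apply_of_apply_eq_self {σ K : M →L[R] M} {f : M} (hKf : K f = f) :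
    (1 - σ * K) f = (1 - σ) f := by
  simp only [sub_apply, mul_apply_eq_comp, hKf]

theorem leftInverse_apply_one_sub_apply_of_apply_eq_self {σ K T : M →L[R] M}
    (hT : T * (1 - σ * K) = 1) {f : M} (hKf : K f = f) : T ((1 - σ) f) = f := by
  rw [← one_sub_mul_apply_of_apply_eq_self hKf, ← mul_apply_eq_comp, hT, one_apply_eq_self]

end ContinuousLinearMap

theorem deformed_projection_fixes_range_general
    {H : Type*} [NormedAddCommGroup H] [InnerProductSpace ℂ H]
    (K σ s T : H →L[ℂ] H)
    (hK : K * K = K)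
    (hssq : s * s = 1 - σ)
    (hT' : T * (1 - σ * K) = 1) :
    ∀ f : H, f ∈ LinearMap.range (K : H →ₗ[ℂ] H) → (s * K * T * s) (s f) = s f := by
  intro f hf
  have hKf : K f = f :=
    (LinearMap.IsIdempotentElem.mem_range_iff
      (ContinuousLinearMap.IsIdempotentElem.toLinearMap hK)).mp hf
  have hTf : T ((1 - σ) f) = f :=
    ContinuousLinearMap.leftInverse_apply_one_sub_apply_of_apply_eq_self hT' hKf
  calc (s * K * T * s) (s f) = s (K (T ((s * s) f))) := rfl
    _ = s f := by rw [hssq, hTf, hKf]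

/-- Let `K` be a bounded idempotent operator on a complex Hilbert space `H`, `σ` a
positive operator with `0 ≤ σ ≤ I`, `s` the positive square root of `1 - σ`, and
suppose `1 - σK` is invertible with inverse `T`.  Set `K^σ = s K (1 - σK)⁻¹ s`.
Then every element `f` of the range of `K` (equivalently, every fixed point of the
idempotent `K`) satisfies `K^σ (s f) = s f`; that is, `s · range K` consists of
fixed points of the projection `K^σ`. -/
theorem deformed_projection_fixes_range
    {H : Type*} [NormedAddCommGroup H] [InnerProductSpace ℂ H] [CompleteSpace H]
    (K σ s T : H →L[ℂ] H)
    (hK : K * K = K)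
    (hσpos : σ.IsPositive) (hσle : (1 - σ).IsPositive)
    (hs : s.IsPositive) (hssq : s * s = 1 - σ)
    (hT : (1 - σ * K) * T = 1) (hT' : T * (1 - σ * K) = 1) :
    ∀ f : H, f ∈ LinearMap.range (K : H →ₗ[ℂ] H) → (s * K * T * s) (s f) = s f :=
  deformed_projection_fixes_range_general K σ s T hK hssq hT'
end
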